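/- arXiv:1812.00951 — 3 statements merged into one kernel-verified Lean document; each statement's English description precedes it below -/
import Mathlib

section
/- Let X and Y be real Banach spaces, U an open subset of X, and f : U → Y a continuous map with a pseudo-Jacobian mapping Jf satisfying the chain rule condition on U. If sur Jf(x₀) > 0 for some x₀ ∈ U, then f is open with linear rate around x₀; more precisely, for each 0 < α < sur Jf(x₀) there is a neighborhood V of x₀ such that for every x ∈ V and every r > 0 with B(x;r) ⊆ V one has B(f(x); αr) ⊆ f(B(x;r)). -/
/-! Fix `α < σ < sur Jf(x₀)`. For `y` near `f x`, Ekeland's variational principle applied to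
`F_y = ‖f · - y‖` on a small closed ball around `x` yields a point `z`, still inside the ball,
at which `F_y` decreases with slope at most `σ` in every direction. If `f z ≠ y`, the chain rule
makes `Δ F_y(z)` a weak-star closed convex pseudo-Jacobian of `F_y` at `z`, so its support
function is at least `-σ‖·‖`; separating it from the weak-star compact ball `σ B_{X*}` shows
that it contains some `y* ∘ T` with `‖y*‖ = 1` and `‖y* ∘ T‖ ≤ σ`, against `C(T) > σ`. -/

open Filter Topology Metric Set MeasureTheory

noncomputable section

variable {X Y : Type*} [NormedAddCommGroup X] [NormedSpace ℝ X]
  [NormedAddCommGroup Y] [NormedSpace ℝ Y]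

/-- The upper right-hand Dini derivative of `φ` at `x` in the direction `v`. -/
def diniPlus (φ : X → ℝ) (x v : X) : ℝ :=
  Filter.limsup (fun t : ℝ => (φ (x + t • v) - φ x) / t) (𝓝[>] (0 : ℝ))

/-- `J` is a pseudo-Jacobian of `f` at `x`. -/
def IsPseudoJacobianAt (f : X → Y) (x : X) (J : Set (X →L[ℝ] Y)) : Prop :=
  J.Nonempty ∧ ∀ (y' : StrongDual ℝ Y) (v : X),
    diniPlus (fun z => y' (f z)) x v ≤ sSup ((fun T : X →L[ℝ] Y => y' (T v)) '' J)

/-- The Clarke generalized directional derivative of `φ` at `x` in the direction `v`. -/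
def clarkeDeriv (φ : X → ℝ) (x v : X) : ℝ :=
  Filter.limsup (fun p : X × ℝ => (φ (p.1 + p.2 • v) - φ p.1) / p.2)
    ((𝓝 x) ×ˢ (𝓝[>] (0 : ℝ)))

/-- The Clarke subdifferential of `φ` at `x`. -/
def clarkeSubdiff (φ : X → ℝ) (x : X) : Set (StrongDual ℝ X) :=
  {x' | ∀ v : X, x' v ≤ clarkeDeriv φ x v}

/-- `λ_F(x)`, the minimal norm of elements of the Clarke subdifferential of `F` at `x`. -/
def lambdaF (F : X → ℝ) (x : X) : ℝ :=
  sInf ((fun w : StrongDual ℝ X => ‖w‖) '' clarkeSubdiff F x)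

/-- The Banach constant `C(T) = inf {‖T* y*‖ : ‖y*‖ = 1}`. -/
def banachC (T : X →L[ℝ] Y) : ℝ :=
  sInf ((fun y' : StrongDual ℝ Y => ‖y'.comp T‖) '' {y' | ‖y'‖ = 1})

/-- The dual Banach constant `C*(T) = inf {‖T u‖ : ‖u‖ = 1}`. -/
def banachCStar (T : X →L[ℝ] Y) : ℝ :=
  sInf ((fun u : X => ‖T u‖) '' {u : X | ‖u‖ = 1})

/-- `sur Jf(x) = sup_{r>0} inf {C(T) : T ∈ co Jf(B(x;r))}`. -/
def surJ (Jf : X → Set (X →L[ℝ] Y)) (x : X) : ℝ :=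
  sSup {c : ℝ | ∃ r > (0 : ℝ),
    c = sInf (banachC '' convexHull ℝ (⋃ z ∈ ball x r, Jf z))}

/-- `inj Jf(x) = sup_{r>0} inf {C*(T) : T ∈ co Jf(B(x;r))}`. -/
def injJ (Jf : X → Set (X →L[ℝ] Y)) (x : X) : ℝ :=
  sSup {c : ℝ | ∃ r > (0 : ℝ),
    c = sInf (banachCStar '' convexHull ℝ (⋃ z ∈ ball x r, Jf z))}

/-- `Δ F_y(x) = ∂‖·‖(f(x)-y) ∘ co̅(Jf(x))`. -/
def DeltaF (f : X → Y) (Jf : X → Set (X →L[ℝ] Y)) (y : Y) (x : X) :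
    Set (StrongDual ℝ X) :=
  {w | ∃ y' ∈ clarkeSubdiff (fun z : Y => ‖z‖) (f x - y),
      ∃ T ∈ closure (convexHull ℝ (Jf x)), w = ContinuousLinearMap.comp y' T}

/-- The chain rule condition for the pseudo-Jacobian mapping `Jf` of `f` on `U`. -/
def ChainRuleCond (f : X → Y) (Jf : X → Set (X →L[ℝ] Y)) (U : Set X) : Prop :=
  ∀ x ∈ U, ∀ y : Y, y ≠ f x →
    IsClosed (StrongDual.toWeakDual '' DeltaF f Jf y x) ∧
    Convex ℝ (DeltaF f Jf y x) ∧
    IsPseudoJacobianAt (fun z : X => ‖f z - y‖) x (DeltaF f Jf y x)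

/-- The strong chain rule condition: the chain rule condition, `f` locally Lipschitz,
and `Δ F_y(x)` contains the Clarke subdifferential of `F_y` at `x`. -/
def StrongChainRuleCond (f : X → Y) (Jf : X → Set (X →L[ℝ] Y)) (U : Set X) : Prop :=
  ChainRuleCond f Jf U ∧
  (∀ x ∈ U, ∃ K : NNReal, ∃ t ∈ 𝓝 x, LipschitzOnWith K f t) ∧
  ∀ x ∈ U, ∀ y : Y, y ≠ f x →
    clarkeSubdiff (fun z : X => ‖f z - y‖) x ⊆ DeltaF f Jf y x

/-- `Jf` is regular at `x₀`. -/
def RegularAt (Jf : X → Set (X →L[ℝ] Y)) (x₀ : X) : Prop :=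
  (∃ r > (0 : ℝ), ∀ T ∈ convexHull ℝ (⋃ z ∈ ball x₀ r, Jf z),
      ∃ e : X ≃L[ℝ] Y, (e : X →L[ℝ] Y) = T) ∧
  surJ Jf x₀ = injJ Jf x₀ ∧ 0 < surJ Jf x₀

/-- The regularity index `reg Jf(x₀)`. -/
def regJ (Jf : X → Set (X →L[ℝ] Y)) (x₀ : X) : ℝ := surJ Jf x₀

/-- `f` is open with linear rate around `x₀`. -/
def OpenWithLinearRateAt (f : X → Y) (x₀ : X) : Prop :=
  ∃ V ∈ 𝓝 x₀, ∃ α > (0 : ℝ), ∀ x ∈ V, ∀ r > (0 : ℝ), ball x r ⊆ V →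
    ball (f x) (α * r) ⊆ f '' ball x r

/-- `h` is a weight: continuous, nondecreasing, nonnegative on `[0,∞)`,
with `∫₀^∞ dρ/(1+h(ρ)) = ∞`. -/
def IsWeight (h : ℝ → ℝ) : Prop :=
  ContinuousOn h (Ici 0) ∧ MonotoneOn h (Ici 0) ∧ (∀ ρ ∈ Ici (0 : ℝ), 0 ≤ h ρ) ∧
  ∫⁻ ρ in Ioi (0 : ℝ), ENNReal.ofReal (1 / (1 + h ρ)) = ⊤

/-- The weighted Chang–Palais–Smale condition for `F` with respect to the weight `h`. -/
def ChangPS (F : X → ℝ) (h : ℝ → ℝ) : Prop :=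
  ∀ u : ℕ → X, (∃ M : ℝ, ∀ n, |F (u n)| ≤ M) →
    Tendsto (fun n => lambdaF F (u n) * (1 + h ‖u n‖)) atTop (𝓝 0) →
    ∃ φ : ℕ → ℕ, StrictMono φ ∧ ∃ z : X, Tendsto ((fun n => u n) ∘ φ) atTop (𝓝 z)

/-- The local Lipschitz constant of `g` at `y`. -/
def lipConstAt (g : Y → X) (y : Y) : ℝ :=
  sInf {c : ℝ | ∃ r > (0 : ℝ), c = sSup {q : ℝ | ∃ u ∈ ball y r, ∃ w ∈ ball y r,
    u ≠ w ∧ q = ‖g u - g w‖ / ‖u - w‖}}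

section Ekeland

variable {α : Type*} [MetricSpace α] {F : α → ℝ} {σ : ℝ}

def ekelandSet (F : α → ℝ) (σ : ℝ) (a : α) : Set α :=
  {u | F u + σ * dist u a ≤ F a}

def ekelandGap (F : α → ℝ) (σ : ℝ) (a : α) : ℝ :=
  F a - sInf (F '' ekelandSet F σ a)

lemma mem_ekelandSet_self (a : α) : a ∈ ekelandSet F σ a := by
  simp [ekelandSet]

lemma ekelandSet_subset_of_mem (hσ : 0 ≤ σ) {a b : α} (hb : b ∈ ekelandSet F σ a) :
    ekelandSet F σ b ⊆ ekelandSet F σ a := fun u hu => by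
  have := mul_le_mul_of_nonneg_left (dist_triangle u b a) hσ
  simp only [ekelandSet, mem_ofPred_eq] at hb hu ⊢
  linarith

lemma isClosed_ekelandSet (hF : LowerSemicontinuous F) (a : α) :
    IsClosed (ekelandSet F σ a) :=
  (hF.add (continuous_const.mul (continuous_id.dist continuous_const)).lowerSemicontinuous
    ).isClosed_preimage (F a)

lemma mul_dist_le_ekelandGap (hbdd : BddBelow (range F)) {a u : α}
    (hu : u ∈ ekelandSet F σ a) : σ * dist u a ≤ ekelandGap F σ a := by
  have := csInf_le (hbdd.mono (image_subset_range F _)) (mem_image_of_mem F hu)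
  simp only [ekelandSet, mem_ofPred_eq] at hu
  simp only [ekelandGap]
  linarith

lemma exists_mem_ekelandSet_ekelandGap_le (hσ : 0 ≤ σ) (hbdd : BddBelow (range F)) (a : α) :
    ∃ b ∈ ekelandSet F σ a, ekelandGap F σ b ≤ ekelandGap F σ a / 2 := by
  set m := sInf (F '' ekelandSet F σ a)
  have hbdd' : BddBelow (F '' ekelandSet F σ a) := hbdd.mono (image_subset_range F _)
  have hm : m ≤ F a := csInf_le hbdd' (mem_image_of_mem F (mem_ekelandSet_self a))
  obtain ⟨b, hb, hFb⟩ : ∃ b ∈ ekelandSet F σ a, F b ≤ (m + F a) / 2 := by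
    rcases hm.lt_or_eq with hlt | heq
    · obtain ⟨_, ⟨b, hb, rfl⟩, hFb⟩ :=
        exists_lt_of_csInf_lt ((nonempty_of_mem (mem_ekelandSet_self a)).image F)
          (by linarith : m < (m + F a) / 2)
      exact ⟨b, hb, hFb.le⟩
    · exact ⟨a, mem_ekelandSet_self a, by linarith⟩
  refine ⟨b, hb, ?_⟩
  have hmb : m ≤ sInf (F '' ekelandSet F σ b) :=
    csInf_le_csInf hbdd' ((nonempty_of_mem (mem_ekelandSet_self b)).image F)
      (image_mono (ekelandSet_subset_of_mem hσ hb))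
  simp only [ekelandGap]
  linarith

lemma exists_seq_ekelandGap_le (hσ : 0 ≤ σ) (hbdd : BddBelow (range F)) (x : α) :
    ∃ xs : ℕ → α, xs 0 = x ∧ (∀ n, xs (n + 1) ∈ ekelandSet F σ (xs n)) ∧
      ∀ n, ekelandGap F σ (xs n) ≤ ekelandGap F σ x * (1 / 2) ^ n := by
  choose next hnext_mem hnext_gap using exists_mem_ekelandSet_ekelandGap_le hσ hbdd
  have hsucc (n : ℕ) : next^[n + 1] x = next (next^[n] x) := Function.iterate_succ_apply' ..
  refine ⟨fun n => next^[n] x, rfl, fun n => by simp only [hsucc, hnext_mem], fun n => ?_⟩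
  induction n with
  | zero => simp
  | succ n ih =>
    simp only [hsucc, pow_succ] at ih ⊢
    linarith [hnext_gap (next^[n] x)]

theorem exists_ekeland_point [CompleteSpace α] (hF : LowerSemicontinuous F)
    (hbdd : BddBelow (range F)) (hσ : 0 < σ) (x : α) :
    ∃ z, F z + σ * dist z x ≤ F x ∧ ∀ u, F z ≤ F u + σ * dist u z := by
  obtain ⟨xs, rfl, hmem_succ, hgap⟩ := exists_seq_ekelandGap_le hσ.le hbdd x
  set D := ekelandGap F σ (xs 0)
  have hsmall (n : ℕ) {u : α} (hu : u ∈ ekelandSet F σ (xs n)) :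
      σ * dist u (xs n) ≤ D * (1 / 2) ^ n :=
    (mul_dist_le_ekelandGap hbdd hu).trans (hgap n)
  have hanti : Antitone fun n => ekelandSet F σ (xs n) :=
    antitone_nat_of_succ_le fun n => ekelandSet_subset_of_mem hσ.le (hmem_succ n)
  have hcauchy : CauchySeq xs := by
    refine cauchySeq_of_le_geometric (1 / 2) (D / σ) (by norm_num) fun n => ?_
    rw [dist_comm, div_mul_eq_mul_div, le_div_iff₀' hσ]
    exact hsmall n (hmem_succ n)
  obtain ⟨z, hz⟩ := cauchySeq_tendsto_of_complete hcauchy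
  have hz_mem (n : ℕ) : z ∈ ekelandSet F σ (xs n) :=
    (isClosed_ekelandSet hF _).mem_of_tendsto hz
      ((eventually_ge_atTop n).mono fun k hk => hanti hk (mem_ekelandSet_self _))
  refine ⟨z, hz_mem 0, fun u => not_lt.1 fun hu => ?_⟩
  have hu_mem (n : ℕ) : u ∈ ekelandSet F σ (xs n) :=
    ekelandSet_subset_of_mem hσ.le (hz_mem n) hu.le
  -- `u` and `z` lie in every `ekelandSet F σ (xs n)`, and these shrink geometrically
  have hdist_le (n : ℕ) : σ * dist u z ≤ 2 * D * (1 / 2) ^ n := by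
    have := mul_le_mul_of_nonneg_left (dist_triangle_right u z (xs n)) hσ.le
    linarith [hsmall n (hu_mem n), hsmall n (hz_mem n)]
  have hlim : Tendsto (fun n : ℕ => 2 * D * (1 / 2 : ℝ) ^ n) atTop (𝓝 0) := by
    simpa using (tendsto_pow_atTop_nhds_zero_of_lt_one (by norm_num : (0 : ℝ) ≤ 1 / 2)
      (by norm_num)).const_mul (2 * D)
  have hσd : σ * dist u z ≤ 0 := ge_of_tendsto' hlim hdist_le
  have huz : u = z := dist_le_zero.1 (nonpos_of_mul_nonpos_right hσd hσ)
  subst huz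
  simp at hu

theorem IsClosed.exists_ekeland_point [CompleteSpace α] {s : Set α} (hs : IsClosed s)
    (hF : LowerSemicontinuousOn F s) (hbdd : BddBelow (F '' s)) (hσ : 0 < σ) {x : α}
    (hx : x ∈ s) :
    ∃ z ∈ s, F z + σ * dist z x ≤ F x ∧ ∀ u ∈ s, F z ≤ F u + σ * dist u z := by
  have := hs.completeSpace_coe
  obtain ⟨z, hzx, hz⟩ := _root_.exists_ekeland_point (lowerSemicontinuous_restrict_iff.2 hF)
    (by rwa [range_domRestrict]) hσ (⟨x, hx⟩ : s)
  exact ⟨z, z.2, hzx, fun u hu => hz ⟨u, hu⟩⟩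

end Ekeland

lemma le_limsup_of_eventually_le_of_nonpos {ι : Type*} {l : Filter ι} [l.NeBot] {g : ι → ℝ}
    {a : ℝ} (ha : a ≤ 0) (h : ∀ᶠ i in l, a ≤ g i) : a ≤ limsup g l := by
  rw [limsup_eq]
  -- `Real.le_sInf` covers the case where `g` is unbounded above and the limsup is `sInf ∅ = 0`
  exact Real.le_sInf (fun b hb => let ⟨_, hai, hib⟩ := (h.and hb).exists; hai.trans hib) ha

lemma abs_norm_add_smul_sub_norm_div_le (z v : Y) {t : ℝ} (ht : 0 < t) :
    |(‖z + t • v‖ - ‖z‖) / t| ≤ ‖v‖ := by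
  rw [abs_div, abs_of_pos ht, div_le_iff₀ ht]
  calc |‖z + t • v‖ - ‖z‖| ≤ ‖z + t • v - z‖ := abs_norm_sub_norm_le _ _
    _ = ‖v‖ * t := by rw [add_sub_cancel_left, norm_smul, Real.norm_of_nonneg ht.le, mul_comm]

lemma eventually_abs_norm_add_smul_sub_norm_div_le (u v : Y) :
    ∀ᶠ p : Y × ℝ in 𝓝 u ×ˢ 𝓝[>] 0, |(‖p.1 + p.2 • v‖ - ‖p.1‖) / p.2| ≤ ‖v‖ :=
  (eventually_mem_nhdsWithin.prod_inr _).mono fun p hp =>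
    abs_norm_add_smul_sub_norm_div_le p.1 v hp

lemma clarkeDeriv_norm_le (u v : Y) : clarkeDeriv (fun z : Y => ‖z‖) u v ≤ ‖v‖ :=
  have h := eventually_abs_norm_add_smul_sub_norm_div_le u v
  limsup_le_of_le (isCoboundedUnder_le_of_eventually_le _ (h.mono fun _ hp => (abs_le.1 hp).1))
    (h.mono fun _ hp => (abs_le.1 hp).2)

lemma norm_add_smul_neg_sub_norm_div_le (z u : Y) {t : ℝ} (ht₀ : 0 < t) (ht₁ : t ≤ 1) :
    (‖z + t • -u‖ - ‖z‖) / t ≤ -‖u‖ + 2 * ‖z - u‖ := by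
  rw [div_le_iff₀ ht₀]
  have hsplit : z + t • -u = (1 - t) • z + t • (z - u) := by
    simp only [smul_neg, smul_sub, sub_smul, one_smul]; abel
  have hconv : ‖z + t • -u‖ ≤ (1 - t) * ‖z‖ + t * ‖z - u‖ := by
    rw [hsplit]
    refine (norm_add_le _ _).trans_eq ?_
    rw [norm_smul, norm_smul, Real.norm_of_nonneg (by linarith), Real.norm_of_nonneg ht₀.le]
  have htri : ‖u‖ ≤ ‖z‖ + ‖z - u‖ := norm_le_norm_add_norm_sub' u z |>.trans_eq
    (by rw [norm_sub_rev])
  nlinarith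

lemma clarkeDeriv_norm_neg_self_le (u : Y) : clarkeDeriv (fun z : Y => ‖z‖) u (-u) ≤ -‖u‖ := by
  have hlim : Tendsto (fun p : Y × ℝ => -‖u‖ + 2 * ‖p.1 - u‖) (𝓝 u ×ˢ 𝓝[>] 0) (𝓝 (-‖u‖)) := by
    have : Tendsto (fun p : Y × ℝ => p.1) (𝓝 u ×ˢ 𝓝[>] 0) (𝓝 u) := tendsto_fst
    simpa using tendsto_const_nhds.add ((this.sub_const u).norm.const_mul 2)
  have hle : ∀ᶠ p : Y × ℝ in 𝓝 u ×ˢ 𝓝[>] 0,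
      (‖p.1 + p.2 • -u‖ - ‖p.1‖) / p.2 ≤ -‖u‖ + 2 * ‖p.1 - u‖ :=
    (Filter.Eventually.prod_inr (Ioo_mem_nhdsGT one_pos) _).mono fun p hp =>
      norm_add_smul_neg_sub_norm_div_le p.1 u hp.1 hp.2.le
  have hbdd := eventually_abs_norm_add_smul_sub_norm_div_le u (-u)
  calc clarkeDeriv (fun z : Y => ‖z‖) u (-u)
      ≤ limsup (fun p : Y × ℝ => -‖u‖ + 2 * ‖p.1 - u‖) (𝓝 u ×ˢ 𝓝[>] 0) :=
        limsup_le_limsup hle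
          (isCoboundedUnder_le_of_eventually_le _ (hbdd.mono fun _ hp => (abs_le.1 hp).1))
          hlim.isBoundedUnder_le
    _ = -‖u‖ := hlim.limsup_eq

lemma norm_eq_one_of_mem_clarkeSubdiff_norm {u : Y} (hu : u ≠ 0) {y' : StrongDual ℝ Y}
    (hy' : y' ∈ clarkeSubdiff (fun z : Y => ‖z‖) u) : ‖y'‖ = 1 := by
  have hle (v : Y) : y' v ≤ ‖v‖ := (hy' v).trans (clarkeDeriv_norm_le u v)
  have hnorm_le : ‖y'‖ ≤ 1 := by
    refine y'.opNorm_le_bound zero_le_one fun v => ?_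
    rw [one_mul, Real.norm_eq_abs, abs_le]
    exact ⟨by linarith [hle (-v), map_neg y' v, norm_neg v], hle v⟩
  have hnorm_u : ‖u‖ ≤ y' u := by
    linarith [(hy' (-u)).trans (clarkeDeriv_norm_neg_self_le u), map_neg y' u]
  refine le_antisymm hnorm_le (le_of_mul_le_mul_right ?_ (norm_pos_iff.2 hu))
  rw [one_mul]
  exact hnorm_u.trans ((le_abs_self _).trans (y'.le_opNorm u))

lemma neg_mul_norm_le_diniPlus {φ : X → ℝ} {z : X} {σ : ℝ} (hσ : 0 ≤ σ)
    (hmin : ∀ᶠ u in 𝓝 z, φ z ≤ φ u + σ * dist u z) (v : X) :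
    -(σ * ‖v‖) ≤ diniPlus φ z v := by
  have hpath : Tendsto (fun t : ℝ => z + t • v) (𝓝[>] 0) (𝓝 z) := by
    have : Continuous fun t : ℝ => z + t • v := by fun_prop
    simpa using (this.tendsto 0).mono_left nhdsWithin_le_nhds
  refine le_limsup_of_eventually_le_of_nonpos (neg_nonpos.2 (by positivity)) ?_
  filter_upwards [eventually_mem_nhdsWithin, hpath.eventually hmin] with t ht hφ
  rw [dist_self_add_left, norm_smul, Real.norm_of_nonneg (le_of_lt ht)] at hφ
  rw [le_div_iff₀ ht]
  linarith

theorem exists_norm_le_of_neg_mul_norm_le_sSup {Δ : Set (StrongDual ℝ X)} (hne : Δ.Nonempty)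
    (hconv : Convex ℝ Δ) (hclosed : IsClosed (StrongDual.toWeakDual '' Δ)) {σ : ℝ} (hσ : 0 ≤ σ)
    (hsupp : ∀ v : X, -(σ * ‖v‖) ≤ sSup ((fun w : StrongDual ℝ X => w v) '' Δ)) :
    ∃ w ∈ Δ, ‖w‖ ≤ σ := by
  by_contra! hfar
  let : LocallyConvexSpace ℝ (WeakDual ℝ X) := WeakBilin.locallyConvexSpace
  set K : Set (WeakDual ℝ X) := WeakDual.toStrongDual ⁻¹' closedBall 0 σ
  have hK : IsCompact K := WeakDual.isCompact_closedBall 0 σ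
  have hKconv : Convex ℝ K :=
    (convex_closedBall (0 : StrongDual ℝ X) σ).linear_preimage
      (WeakDual.toStrongDual : WeakDual ℝ X ≃ₗ[ℝ] StrongDual ℝ X).toLinearMap
  have hdisj : Disjoint K (StrongDual.toWeakDual '' Δ) := by
    rw [disjoint_left]
    rintro _ hwK ⟨w, hw, rfl⟩
    exact (hfar w hw).not_ge (by simpa [K] using hwK)
  obtain ⟨φ, u₁, u₂, hφK, hu, hφΔ⟩ := geometric_hahn_banach_compact_closed hKconv hK
    (hconv.linear_image StrongDual.toWeakDual.toLinearMap) hclosed hdisj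
  -- continuous functionals on the weak-star dual are evaluations
  obtain ⟨v, rfl⟩ := LinearMap.dualEmbedding_surjective (topDualPairing ℝ X) φ
  obtain ⟨g, hg, hgv⟩ := exists_dual_vector'' ℝ v
  have h₁ : σ * ‖v‖ < u₁ := by
    have hσg : StrongDual.toWeakDual (σ • g) ∈ K := by
      simpa [K, norm_smul, abs_of_nonneg hσ] using mul_le_of_le_one_right hσ hg
    have h := hφK _ hσg
    change (σ • g) v < u₁ at h
    simpa [hgv] using h
  have h₂ : sSup ((fun w : StrongDual ℝ X => w (-v)) '' Δ) ≤ -u₂ := by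
    refine csSup_le (hne.image _) ?_
    rintro _ ⟨w, hw, rfl⟩
    have h := hφΔ _ (mem_image_of_mem _ hw)
    change u₂ < w v at h
    change w (-v) ≤ -u₂
    linarith [map_neg w v]
  have := hsupp (-v)
  rw [norm_neg] at this
  linarith

lemma banachC_le_norm_comp {y' : StrongDual ℝ Y} (hy' : ‖y'‖ = 1) (T : X →L[ℝ] Y) :
    banachC T ≤ ‖y'.comp T‖ :=
  csInf_le ⟨0, by rintro _ ⟨_, -, rfl⟩; exact norm_nonneg _⟩ ⟨y', hy', rfl⟩

lemma le_norm_comp_of_mem_closure {K : Set (X →L[ℝ] Y)} {c : ℝ}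
    (hK : ∀ T ∈ K, c ≤ banachC T) {y' : StrongDual ℝ Y} (hy' : ‖y'‖ = 1) {T : X →L[ℝ] Y}
    (hT : T ∈ closure K) : c ≤ ‖y'.comp T‖ :=
  closure_minimal (fun S hS => (hK S hS).trans (banachC_le_norm_comp hy' S))
    (isClosed_le continuous_const (continuous_const.clm_comp continuous_id).norm) hT

lemma exists_le_banachC_of_lt_surJ {Jf : X → Set (X →L[ℝ] Y)} {x₀ : X} {α : ℝ}
    (hα : α < surJ Jf x₀) :
    ∃ r > 0, ∃ c > α, ∀ z ∈ ball x₀ r, ∀ T ∈ convexHull ℝ (Jf z), c ≤ banachC T := by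
  obtain ⟨c, ⟨r, hr, rfl⟩, hαc⟩ := exists_lt_of_lt_csSup (by exact ⟨_, 1, one_pos, rfl⟩) hα
  refine ⟨r, hr, _, hαc, fun z hz T hT => csInf_le ?_ ⟨T, convexHull_mono
    (subset_biUnion_of_mem (u := Jf) hz) hT, rfl⟩⟩
  refine ⟨0, ?_⟩
  rintro _ ⟨S, -, rfl⟩
  exact Real.sInf_nonneg (by rintro _ ⟨y', -, rfl⟩; exact norm_nonneg _)

theorem apply_eq_of_eventually_norm_sub_le {f : X → Y} {Jf : X → Set (X →L[ℝ] Y)} {U : Set X}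
    (hcr : ChainRuleCond f Jf U) {z : X} (hz : z ∈ U) {y : Y} {σ c : ℝ} (hσ : 0 ≤ σ)
    (hσc : σ < c) (hc : ∀ T ∈ convexHull ℝ (Jf z), c ≤ banachC T)
    (hmin : ∀ᶠ u in 𝓝 z, ‖f z - y‖ ≤ ‖f u - y‖ + σ * dist u z) : f z = y := by
  by_contra hne
  obtain ⟨hclosed, hconv, hΔne, hpj⟩ := hcr z hz y (Ne.symm hne)
  have hsupp (v : X) : -(σ * ‖v‖) ≤ sSup ((fun w : StrongDual ℝ X => w v) '' DeltaF f Jf y z) :=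
    (neg_mul_norm_le_diniPlus hσ hmin v).trans (hpj (ContinuousLinearMap.id ℝ ℝ) v)
  obtain ⟨_, ⟨y', hy', T, hT, rfl⟩, hle⟩ :=
    exists_norm_le_of_neg_mul_norm_le_sSup hΔne hconv hclosed hσ hsupp
  have := le_norm_comp_of_mem_closure hc
    (norm_eq_one_of_mem_clarkeSubdiff_norm (sub_ne_zero.2 hne) hy') hT
  linarith

theorem ball_subset_image_ball [CompleteSpace X] {f : X → Y} {Jf : X → Set (X →L[ℝ] Y)}
    {U W : Set X} (hf : ContinuousOn f U) (hcr : ChainRuleCond f Jf U) (hWU : W ⊆ U)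
    {α c : ℝ} (hα : 0 < α) (hαc : α < c)
    (hc : ∀ z ∈ W, ∀ T ∈ convexHull ℝ (Jf z), c ≤ banachC T) {x : X} {r : ℝ}
    (hxr : ball x r ⊆ W) : ball (f x) (α * r) ⊆ f '' ball x r := by
  intro y hy
  set σ := (α + c) / 2
  have hασ : α < σ := by simp only [σ]; linarith
  have hσc : σ < c := by simp only [σ]; linarith
  have hσ : 0 < σ := hα.trans hασ
  set ε := ‖f x - y‖
  have hεr : ε / σ < r := by
    rw [mem_ball, dist_eq_norm, norm_sub_rev] at hy
    have hr : 0 < r := pos_of_mul_pos_right ((norm_nonneg _).trans_lt hy) hα.le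
    rw [div_lt_iff₀ hσ]
    nlinarith
  set ρ := (ε / σ + r) / 2
  have hρ : ε / σ < ρ := by simp only [ρ]; linarith
  have hρr : closedBall x ρ ⊆ ball x r := closedBall_subset_ball (by simp only [ρ]; linarith)
  have hρU : closedBall x ρ ⊆ U := hρr.trans (hxr.trans hWU)
  obtain ⟨z, -, hzx, hmin⟩ := isClosed_closedBall.exists_ekeland_point
    (F := fun u => ‖f u - y‖) ((hf.mono hρU).sub continuousOn_const).norm.lowerSemicontinuousOn
    ⟨0, by rintro _ ⟨_, -, rfl⟩; exact norm_nonneg _⟩ hσ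
    (mem_closedBall_self ((div_nonneg (norm_nonneg _) hσ.le).trans hρ.le))
  have hz : z ∈ ball x ρ := by
    have : σ * dist z x ≤ ε := by linarith [norm_nonneg (f z - y)]
    exact mem_ball.2 (((le_div_iff₀' hσ).2 this).trans_lt hρ)
  refine ⟨z, hρr (ball_subset_closedBall hz),
    apply_eq_of_eventually_norm_sub_le hcr (hρU (ball_subset_closedBall hz)) hσ.le hσc
      (hc z (hxr (hρr (ball_subset_closedBall hz)))) ?_⟩
  filter_upwards [isOpen_ball.mem_nhds hz] with u hu using hmin u (ball_subset_closedBall hu)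

theorem local_openness_general {X Y : Type*} [NormedAddCommGroup X] [NormedSpace ℝ X] [CompleteSpace X]
    [NormedAddCommGroup Y] [NormedSpace ℝ Y]
    (U : Set X) (hU : IsOpen U) (f : X → Y) (hf : ContinuousOn f U)
    (Jf : X → Set (X →L[ℝ] Y))
    (hcr : ChainRuleCond f Jf U) (x₀ : X) (hx₀ : x₀ ∈ U) (hsur : 0 < surJ Jf x₀) :
    OpenWithLinearRateAt f x₀ ∧
    ∀ α : ℝ, 0 < α → α < surJ Jf x₀ → ∃ V ∈ 𝓝 x₀, V ⊆ U ∧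
      ∀ x ∈ V, ∀ r > (0 : ℝ), ball x r ⊆ V → ball (f x) (α * r) ⊆ f '' ball x r := by
  have hrate (α : ℝ) (hα : 0 < α) (hαsur : α < surJ Jf x₀) : ∃ V ∈ 𝓝 x₀, V ⊆ U ∧
      ∀ x ∈ V, ∀ r > (0 : ℝ), ball x r ⊆ V → ball (f x) (α * r) ⊆ f '' ball x r := by
    obtain ⟨r₁, hr₁, c, hαc, hc⟩ := exists_le_banachC_of_lt_surJ hαsur
    obtain ⟨r₂, hr₂, hr₂U⟩ := Metric.isOpen_iff.1 hU x₀ hx₀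
    have hVU : ball x₀ (min r₁ r₂) ⊆ U := (ball_subset_ball (min_le_right _ _)).trans hr₂U
    refine ⟨_, ball_mem_nhds x₀ (lt_min hr₁ hr₂), hVU, fun x _ r _ hxr => ?_⟩
    exact ball_subset_image_ball hf hcr hVU hα hαc
      (fun z hz => hc z (ball_subset_ball (min_le_left _ _) hz)) hxr
  obtain ⟨V, hV, -, hV_rate⟩ := hrate _ (half_pos hsur) (half_lt_self hsur)
  exact ⟨⟨V, hV, _, half_pos hsur, hV_rate⟩, hrate⟩

/-- **Local openness theorem.** If `f : U → Y` is continuous with a pseudo-Jacobian mapping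
`Jf` satisfying the chain rule condition on `U` and `sur Jf(x₀) > 0`, then `f` is open with
linear rate around `x₀`: for each `0 < α < sur Jf(x₀)` there is a neighborhood `V` of `x₀`
such that `B(f(x); αr) ⊆ f(B(x;r))` whenever `x ∈ V`, `r > 0` and `B(x;r) ⊆ V`. -/
theorem local_openness {X Y : Type*} [NormedAddCommGroup X] [NormedSpace ℝ X] [CompleteSpace X]
    [NormedAddCommGroup Y] [NormedSpace ℝ Y] [CompleteSpace Y]
    (U : Set X) (hU : IsOpen U) (f : X → Y) (hf : ContinuousOn f U)
    (Jf : X → Set (X →L[ℝ] Y)) (hJf : ∀ x ∈ U, IsPseudoJacobianAt f x (Jf x))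
    (hcr : ChainRuleCond f Jf U) (x₀ : X) (hx₀ : x₀ ∈ U) (hsur : 0 < surJ Jf x₀) :
    OpenWithLinearRateAt f x₀ ∧
    ∀ α : ℝ, 0 < α → α < surJ Jf x₀ → ∃ V ∈ 𝓝 x₀, V ⊆ U ∧
      ∀ x ∈ V, ∀ r > (0 : ℝ), ball x r ⊆ V → ball (f x) (α * r) ⊆ f '' ball x r :=
  local_openness_general U hU f hf Jf hcr x₀ hx₀ hsur
end
end

section
/- Let X and Y be real Banach spaces, U an open subset of X, and f : U → Y a continuous map with a pseudo-Jacobian mapping Jf satisfying the chain rule condition on U. If inj Jf(x₀) > 0 for some x₀ ∈ U, then f is locally one-to-one at x₀; more precisely, for each 0 < α < inj Jf(x₀) there exists a neighborhood V of x₀ such that for every u, w ∈ V one has ‖f(u) − f(w)‖ ≥ α‖u − w‖. -/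
open Filter Topology Metric Set MeasureTheory

noncomputable section

variable {X Y : Type*} [NormedAddCommGroup X] [NormedSpace ℝ X]
  [NormedAddCommGroup Y] [NormedSpace ℝ Y]

/-
Suppose `‖f u - f w‖ < α ‖u - w‖`, where `α ≤ C*(T)` for every `T` in the convex hull `H` of the
pseudo-Jacobians near `x₀`. Then `f u - f w` lies in the open ball of radius `α ‖u - w‖`, which
misses the convex set `{T (u - w) : T ∈ H}`; let `y'` separate them, `y' (f u - f w) < σ ≤
y' (T (u - w))`. The pseudo-Jacobian inequality for `-y'` bounds the upper Dini derivative of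
`-y' ∘ f` in the direction `u - w` by `-σ < 0` all along the segment `[w, u]`, and the mean value
inequality for Dini derivatives gives `y' (f u - f w) ≥ σ`, a contradiction.
-/

theorem banachCStar_mul_norm_le (T : X →L[ℝ] Y) (v : X) : banachCStar T * ‖v‖ ≤ ‖T v‖ := by
  rcases eq_or_ne v 0 with rfl | hv
  · simp
  have hv' : 0 < ‖v‖ := norm_pos_iff.2 hv
  have hunit : ‖‖v‖⁻¹ • v‖ = 1 := by
    rw [norm_smul, norm_inv, norm_norm, inv_mul_cancel₀ hv'.ne']
  have hle : banachCStar T ≤ ‖T (‖v‖⁻¹ • v)‖ :=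
    csInf_le ⟨0, by rintro _ ⟨_, -, rfl⟩; exact norm_nonneg _⟩ ⟨_, hunit, rfl⟩
  rwa [T.map_smul, norm_smul, norm_inv, norm_norm, inv_mul_eq_div, le_div_iff₀ hv'] at hle

theorem exists_pos_forall_lt_banachCStar_of_lt_injJ {Jf : X → Set (X →L[ℝ] Y)} {x : X} {α : ℝ}
    (h : α < injJ Jf x) :
    ∃ r > 0, ∀ T ∈ convexHull ℝ (⋃ z ∈ ball x r, Jf z), α < banachCStar T := by
  obtain ⟨_, ⟨r, hr, rfl⟩, hα⟩ := exists_lt_of_lt_csSup (by exact ⟨_, 1, one_pos, rfl⟩) h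
  refine ⟨r, hr, fun T hT => hα.trans_le (csInf_le ?_ ⟨T, hT, rfl⟩)⟩
  refine ⟨0, ?_⟩
  rintro _ ⟨S, -, rfl⟩
  exact Real.sInf_nonneg (by rintro _ ⟨_, -, rfl⟩; exact norm_nonneg _)

theorem IsPseudoJacobianAt.diniPlus_le {f : X → Y} {x : X} {J : Set (X →L[ℝ] Y)}
    (hJ : IsPseudoJacobianAt f x J) (y' : StrongDual ℝ Y) (v : X) {M : ℝ}
    (hM : ∀ T ∈ J, y' (T v) ≤ M) : diniPlus (fun z => y' (f z)) x v ≤ M :=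
  (hJ.2 y' v).trans (csSup_le (hJ.1.image _) (by rintro _ ⟨T, hT, rfl⟩; exact hM T hT))

/- A difference quotient that is not eventually bounded above has junk `limsup` `0`, so a
negative `diniPlus` is a genuine upper limit. -/
theorem frequently_lt_of_diniPlus_lt {φ : X → ℝ} {x v : X} {r : ℝ}
    (hneg : diniPlus φ x v < 0) (hr : diniPlus φ x v < r) :
    ∃ᶠ τ in 𝓝[>] (0 : ℝ), (φ (x + τ • v) - φ x) / τ < r := by
  set A := {a : ℝ | ∀ᶠ τ in 𝓝[>] (0 : ℝ), (φ (x + τ • v) - φ x) / τ ≤ a}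
  have hdini : diniPlus φ x v = sInf A := Filter.limsup_eq
  have hA : A.Nonempty := by
    by_contra hA
    rw [hdini, Set.not_nonempty_iff_eq_empty.1 hA, Real.sInf_empty] at hneg
    exact lt_irrefl 0 hneg
  obtain ⟨a, haA : ∀ᶠ τ in 𝓝[>] (0 : ℝ), (φ (x + τ • v) - φ x) / τ ≤ a, har⟩ :=
    exists_lt_of_csInf_lt hA (hdini ▸ hr)
  exact (haA.mono fun τ hτ => hτ.trans_lt har).frequently

theorem sub_le_of_diniPlus_le {φ : X → ℝ} {u w : X} {M : ℝ} (hφ : ContinuousOn φ (segment ℝ w u))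
    (hM : M < 0) (hd : ∀ z ∈ segment ℝ w u, diniPlus φ z (u - w) ≤ M) : φ u - φ w ≤ M := by
  set g : ℝ → ℝ := fun t => φ (w + t • (u - w))
  have hseg : ∀ t ∈ Icc (0 : ℝ) 1, w + t • (u - w) ∈ segment ℝ w u := fun t ht =>
    segment_eq_image' ℝ w u ▸ ⟨t, ht, rfl⟩
  have hg : ContinuousOn g (Icc 0 1) := hφ.comp (by fun_prop) hseg
  have bound : ∀ t ∈ Ico (0 : ℝ) 1, ∀ r, M < r → ∃ᶠ s in 𝓝[>] t, slope g t s < r := by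
    intro t ht r hr
    have hdt := hd _ (hseg t (Ico_subset_Icc_self ht))
    have hshift : Tendsto (t + ·) (𝓝[>] (0 : ℝ)) (𝓝[>] t) :=
      tendsto_nhdsWithin_of_tendsto_nhds_of_eventually_within _
        (((continuous_const_add t).tendsto' 0 t (add_zero t)).mono_left nhdsWithin_le_nhds)
        (eventually_nhdsWithin_of_forall fun _ => lt_add_of_pos_right t)
    refine hshift.frequently
      ((frequently_lt_of_diniPlus_lt (hdt.trans_lt hM) (hdt.trans_lt hr)).mono fun τ hτ => ?_)
    rwa [slope_def_field, add_sub_cancel_left, show g (t + τ) = φ (w + t • (u - w) + τ • (u - w)) by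
      simp only [g, add_smul, add_assoc]]
  have := image_le_of_liminf_slope_right_le_deriv_boundary hg (B := fun t => g 0 + M * t)
    (B' := fun _ => M) (by simp) (by fun_prop)
    (fun t _ => by simpa using (((hasDerivAt_id t).const_mul M).const_add (g 0)).hasDerivWithinAt)
    bound (right_mem_Icc.2 zero_le_one)
  simp only [g, one_smul, add_sub_cancel, mul_one, zero_smul, add_zero] at this
  linarith

theorem exists_dual_lt_le_of_norm_lt {C : Set Y} (hC : Convex ℝ C) {p : Y} {r : ℝ}
    (hp : ‖p‖ < r) (hCr : ∀ y ∈ C, r ≤ ‖y‖) :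
    ∃ (y' : StrongDual ℝ Y) (σ : ℝ), 0 < σ ∧ y' p < σ ∧ ∀ y ∈ C, σ ≤ y' y := by
  have hdisj : Disjoint (ball (0 : Y) r) C := Set.disjoint_left.2 fun y hy hyC =>
    (mem_ball_zero_iff.1 hy).not_ge (hCr y hyC)
  obtain ⟨y', σ, hlt, hle⟩ := geometric_hahn_banach_open (convex_ball 0 r) isOpen_ball hC hdisj
  have hσ : 0 < σ := by simpa using hlt 0 (mem_ball_self ((norm_nonneg p).trans_lt hp))
  exact ⟨y', σ, hσ, hlt p (mem_ball_zero_iff.2 hp), hle⟩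

theorem mul_norm_sub_le_norm_sub_of_isPseudoJacobianAt {f : X → Y} {J : X → Set (X →L[ℝ] Y)}
    {V : Set X} {H : Set (X →L[ℝ] Y)} {α : ℝ} (hV : Convex ℝ V) (hf : ContinuousOn f V)
    (hJ : ∀ z ∈ V, IsPseudoJacobianAt f z (J z)) (hH : Convex ℝ H) (hJH : ∀ z ∈ V, J z ⊆ H)
    (hHα : ∀ T ∈ H, ∀ v, α * ‖v‖ ≤ ‖T v‖) {u w : X} (hu : u ∈ V) (hw : w ∈ V) :
    α * ‖u - w‖ ≤ ‖f u - f w‖ := by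
  by_contra! hlt
  set v := u - w
  have hC : Convex ℝ ((fun T : X →L[ℝ] Y => T v) '' H) :=
    hH.linear_image (ContinuousLinearMap.apply ℝ Y v).toLinearMap
  obtain ⟨y', σ, hσ, hsep, hle⟩ := exists_dual_lt_le_of_norm_lt hC hlt
    (by rintro _ ⟨T, hT, rfl⟩; exact hHα T hT v)
  have hseg := hV.segment_subset hw hu
  have hdini : ∀ z ∈ segment ℝ w u, diniPlus (fun x => (-y') (f x)) z v ≤ -σ := fun z hz =>
    (hJ z (hseg hz)).diniPlus_le (-y') v fun T hT =>
      neg_le_neg (hle _ ⟨T, hJH z (hseg hz) hT, rfl⟩)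
  have hmv := sub_le_of_diniPlus_le ((-y').continuous.comp_continuousOn (hf.mono hseg))
    (neg_neg_of_pos hσ) hdini
  simp only [Function.comp_apply, neg_apply] at hmv
  rw [map_sub] at hsep
  linarith

theorem injOn_of_mul_norm_sub_le {E F : Type*} [NormedAddCommGroup E] [NormedAddCommGroup F]
    {f : E → F} {V : Set E} {α : ℝ} (hα : 0 < α)
    (h : ∀ u ∈ V, ∀ w ∈ V, α * ‖u - w‖ ≤ ‖f u - f w‖) : InjOn f V := fun u hu w hw huw => by
  have hle := h u hu w hw
  rw [huw, sub_self, norm_zero, ← mul_zero α] at hle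
  exact sub_eq_zero.1 (norm_le_zero_iff.1 (le_of_mul_le_mul_left hle hα))

theorem local_injectivity_general {X Y : Type*} [NormedAddCommGroup X] [NormedSpace ℝ X]
    [NormedAddCommGroup Y] [NormedSpace ℝ Y]
    (U : Set X) (hU : IsOpen U) (f : X → Y) (hf : ContinuousOn f U)
    (Jf : X → Set (X →L[ℝ] Y)) (hJf : ∀ x ∈ U, IsPseudoJacobianAt f x (Jf x))
    (x₀ : X) (hx₀ : x₀ ∈ U) (hinj : 0 < injJ Jf x₀) :
    (∃ V ∈ 𝓝 x₀, Set.InjOn f V) ∧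
    ∀ α : ℝ, 0 < α → α < injJ Jf x₀ → ∃ V ∈ 𝓝 x₀, V ⊆ U ∧
      ∀ u ∈ V, ∀ w ∈ V, α * ‖u - w‖ ≤ ‖f u - f w‖ := by
  have hest : ∀ α : ℝ, 0 < α → α < injJ Jf x₀ → ∃ V ∈ 𝓝 x₀, V ⊆ U ∧
      ∀ u ∈ V, ∀ w ∈ V, α * ‖u - w‖ ≤ ‖f u - f w‖ := by
    intro α _ hα
    obtain ⟨r, hr, hlt⟩ := exists_pos_forall_lt_banachCStar_of_lt_injJ hα
    obtain ⟨ε, hε, hεU⟩ := Metric.isOpen_iff.1 hU x₀ hx₀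
    have hsub : ball x₀ (min r ε) ⊆ ball x₀ r := ball_subset_ball (min_le_left _ _)
    have hVU : ball x₀ (min r ε) ⊆ U := (ball_subset_ball (min_le_right _ _)).trans hεU
    refine ⟨_, ball_mem_nhds _ (lt_min hr hε), hVU, fun u hu w hw => ?_⟩
    exact mul_norm_sub_le_norm_sub_of_isPseudoJacobianAt (convex_ball _ _) (hf.mono hVU)
      (fun z hz => hJf z (hVU hz)) (convex_convexHull ℝ _)
      (fun z hz => (subset_biUnion_of_mem (hsub hz)).trans (subset_convexHull ℝ _))
      (fun T hT v => (mul_le_mul_of_nonneg_right (hlt T hT).le (norm_nonneg v)).trans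
        (banachCStar_mul_norm_le T v)) hu hw
  obtain ⟨V, hV, -, hVα⟩ := hest _ (half_pos hinj) (half_lt_self hinj)
  exact ⟨⟨V, hV, injOn_of_mul_norm_sub_le (half_pos hinj) hVα⟩, hest⟩

/-- **Local injectivity theorem.** If `f : U → Y` is continuous with a pseudo-Jacobian mapping
`Jf` satisfying the chain rule condition on `U` and `inj Jf(x₀) > 0`, then `f` is locally
one-to-one at `x₀`: for each `0 < α < inj Jf(x₀)` there is a neighborhood `V` of `x₀` such
that `‖f(u) − f(w)‖ ≥ α‖u − w‖` for all `u, w ∈ V`. -/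
theorem local_injectivity {X Y : Type*} [NormedAddCommGroup X] [NormedSpace ℝ X] [CompleteSpace X]
    [NormedAddCommGroup Y] [NormedSpace ℝ Y] [CompleteSpace Y]
    (U : Set X) (hU : IsOpen U) (f : X → Y) (hf : ContinuousOn f U)
    (Jf : X → Set (X →L[ℝ] Y)) (hJf : ∀ x ∈ U, IsPseudoJacobianAt f x (Jf x))
    (hcr : ChainRuleCond f Jf U) (x₀ : X) (hx₀ : x₀ ∈ U) (hinj : 0 < injJ Jf x₀) :
    (∃ V ∈ 𝓝 x₀, Set.InjOn f V) ∧
    ∀ α : ℝ, 0 < α → α < injJ Jf x₀ → ∃ V ∈ 𝓝 x₀, V ⊆ U ∧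
      ∀ u ∈ V, ∀ w ∈ V, α * ‖u - w‖ ≤ ‖f u - f w‖ :=
  local_injectivity_general U hU f hf Jf hJf x₀ hx₀ hinj
end
end

section
/- Let X and Y be real Banach spaces, f : X → Y a locally Lipschitz map, and y ∈ Y. Let F_y(x) := ‖f(x) − y‖ and G_y(x) := (1/2)‖f(x) − y‖². If G_y satisfies the weighted Chang–Palais–Smale condition with respect to some weight h, then F_y satisfies the weighted Chang–Palais–Smale condition with respect to the same weight h. -/
open Filter Topology Metric Set MeasureTheory

noncomputable section

variable {X Y : Type*} [NormedAddCommGroup X] [NormedSpace ℝ X]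
  [NormedAddCommGroup Y] [NormedSpace ℝ Y]

/-!
If `F ≥ 0` is Lipschitz near `x`, the difference quotients of `½F²` are those of `F` times the
mean of the two values of `F`; the mean tends to `F x ≥ 0` and the quotients of `F` stay bounded,
so `(½F²)°(x; v) = F x · F°(x; v)`. Hence `∂G_y(x) = F_y(x) · ∂F_y(x)` and
`λ_{G_y} = F_y · λ_{F_y}`. Along a Chang–Palais–Smale sequence for `F_y` the values `F_y(uₙ)` are
bounded by some `M`, so `|λ_{G_y}(uₙ)(1 + h‖uₙ‖)| ≤ M |λ_{F_y}(uₙ)(1 + h‖uₙ‖)| → 0`, and the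
sequence is one for `G_y` as well.
-/

section ClarkeHalfSquare

lemma limsup_mul_of_tendsto_of_nonneg {ι : Type*} {l : Filter ι} [l.NeBot] {a b : ι → ℝ}
    {c B : ℝ} (hc : 0 ≤ c) (ha : Tendsto a l (𝓝 c)) (hb : ∀ᶠ i in l, |b i| ≤ B) :
    limsup (fun i => a i * b i) l = c * limsup b l := by
  have hb_le : IsBoundedUnder (· ≤ ·) l b := ⟨B, hb.mono fun i hi => (abs_le.1 hi).2⟩
  have hb_ge : IsBoundedUnder (· ≥ ·) l b := ⟨-B, hb.mono fun i hi => (abs_le.1 hi).1⟩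
  have hcb_le : IsBoundedUnder (· ≤ ·) l (fun i => c * b i) :=
    ⟨c * B, hb.mono fun i hi => mul_le_mul_of_nonneg_left (abs_le.1 hi).2 hc⟩
  have hcb_ge : IsBoundedUnder (· ≥ ·) l (fun i => c * b i) :=
    ⟨c * -B, hb.mono fun i hi => mul_le_mul_of_nonneg_left (abs_le.1 hi).1 hc⟩
  have hsmall : Tendsto (fun i => (a i - c) * b i) l (𝓝 0) := by
    refine Tendsto.zero_mul_isBoundedUnder_le ?_ ⟨B, hb⟩
    simpa using ha.sub_const c
  have hscale : limsup (fun i => c * b i) l = c * limsup b l :=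
    ((monotone_mul_left_of_nonneg hc).map_limsup_of_continuousAt b
      (continuous_const_mul c).continuousAt hb_le hb_ge.isCoboundedUnder_le).symm
  have hsplit : (fun i => a i * b i) = (fun i => c * b i) + fun i => (a i - c) * b i := by
    ext i
    simp only [Pi.add_apply]
    ring
  rw [hsplit, ← hscale]
  apply le_antisymm
  · simpa [hsmall.limsup_eq] using limsup_add_le hcb_ge hcb_le
      hsmall.isBoundedUnder_ge.isCoboundedUnder_le hsmall.isBoundedUnder_le
  · simpa [hsmall.liminf_eq] using le_limsup_add hcb_le hcb_ge.isCoboundedUnder_le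
      hsmall.isBoundedUnder_le hsmall.isBoundedUnder_ge

lemma tendsto_add_smul_nhds_prod (x v : X) :
    Tendsto (fun p : X × ℝ => p.1 + p.2 • v) (𝓝 x ×ˢ 𝓝[>] 0) (𝓝 x) := by
  have hsnd : Tendsto (fun p : X × ℝ => p.2) (𝓝 x ×ˢ 𝓝[>] 0) (𝓝 0) :=
    tendsto_snd.mono_right nhdsWithin_le_nhds
  simpa using tendsto_fst.add (hsnd.smul_const v)

variable {F : X → ℝ} {x : X} {K : NNReal} {t : Set X}

lemma eventually_abs_diffQuot_le (ht : t ∈ 𝓝 x) (hF : LipschitzOnWith K F t) (v : X) :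
    ∀ᶠ p : X × ℝ in 𝓝 x ×ˢ 𝓝[>] 0, |(F (p.1 + p.2 • v) - F p.1) / p.2| ≤ K * ‖v‖ := by
  filter_upwards [tendsto_fst ht, tendsto_add_smul_nhds_prod x v ht,
    tendsto_snd self_mem_nhdsWithin] with ⟨z, s⟩ hz hzs (hs : 0 < s)
  have hdist := hF.dist_le_mul _ hzs _ hz
  rw [Real.dist_eq, dist_eq_norm, add_sub_cancel_left, norm_smul, Real.norm_of_nonneg hs.le]
    at hdist
  rw [abs_div, abs_of_pos hs, div_le_iff₀ hs]
  linarith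

lemma clarkeDeriv_half_sq (ht : t ∈ 𝓝 x) (hF : LipschitzOnWith K F t) (hFx : 0 ≤ F x)
    (v : X) : clarkeDeriv (fun z => 1 / 2 * F z ^ 2) x v = F x * clarkeDeriv F x v := by
  have hcont : ContinuousAt F x := hF.continuousOn.continuousAt ht
  have hmean : Tendsto (fun p : X × ℝ => (F (p.1 + p.2 • v) + F p.1) / 2)
      (𝓝 x ×ˢ 𝓝[>] 0) (𝓝 (F x)) := by
    simpa using ((hcont.tendsto.comp (tendsto_add_smul_nhds_prod x v)).add
      (hcont.tendsto.comp tendsto_fst)).div_const 2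
  have hfactor : ∀ᶠ p : X × ℝ in 𝓝 x ×ˢ 𝓝[>] 0,
      (1 / 2 * F (p.1 + p.2 • v) ^ 2 - 1 / 2 * F p.1 ^ 2) / p.2 =
        (F (p.1 + p.2 • v) + F p.1) / 2 * ((F (p.1 + p.2 • v) - F p.1) / p.2) := by
    filter_upwards [tendsto_snd self_mem_nhdsWithin] with p (hp : 0 < p.2)
    field_simp
    ring
  rw [clarkeDeriv, limsup_congr hfactor]
  exact limsup_mul_of_tendsto_of_nonneg hFx hmean (eventually_abs_diffQuot_le ht hF v)

end ClarkeHalfSquare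

section LambdaF

open scoped Pointwise

variable {F G : X → ℝ} {x : X} {c : ℝ}

lemma lambdaF_nonneg (F : X → ℝ) (x : X) : 0 ≤ lambdaF F x :=
  Real.sInf_nonneg (by rintro _ ⟨w, -, rfl⟩; exact norm_nonneg w)

lemma lambdaF_eq_zero_of_zero_mem (h : 0 ∈ clarkeSubdiff F x) : lambdaF F x = 0 := by
  have hbdd : BddBelow ((fun w : StrongDual ℝ X => ‖w‖) '' clarkeSubdiff F x) :=
    ⟨0, by rintro _ ⟨w, -, rfl⟩; exact norm_nonneg w⟩
  refine le_antisymm ?_ (lambdaF_nonneg F x)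
  simpa [lambdaF] using csInf_le hbdd (Set.mem_image_of_mem _ h)

lemma clarkeSubdiff_eq_smul (hc : 0 < c) (h : ∀ v, clarkeDeriv G x v = c * clarkeDeriv F x v) :
    clarkeSubdiff G x = c • clarkeSubdiff F x := by
  ext w
  rw [Set.mem_smul_set_iff_inv_smul_mem₀ hc.ne']
  refine forall_congr' fun v => ?_
  rw [h v, smul_apply, smul_eq_mul, ← div_eq_inv_mul, div_le_iff₀' hc]

lemma lambdaF_eq_mul_of_clarkeDeriv_eq (hc : 0 ≤ c)
    (h : ∀ v, clarkeDeriv G x v = c * clarkeDeriv F x v) :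
    lambdaF G x = c * lambdaF F x := by
  rcases hc.eq_or_lt with rfl | hc
  · rw [zero_mul]
    exact lambdaF_eq_zero_of_zero_mem fun v => by simp [h v]
  · rw [lambdaF, lambdaF, clarkeSubdiff_eq_smul hc h, ← Set.image_smul, Set.image_image,
      ← smul_eq_mul, ← Real.sInf_smul_of_nonneg hc.le, ← Set.image_smul, Set.image_image]
    simp only [norm_smul, Real.norm_of_nonneg hc.le, smul_eq_mul]

lemma lambdaF_half_sq {K : NNReal} {t : Set X} (ht : t ∈ 𝓝 x) (hF : LipschitzOnWith K F t)
    (hFx : 0 ≤ F x) : lambdaF (fun z => 1 / 2 * F z ^ 2) x = F x * lambdaF F x :=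
  lambdaF_eq_mul_of_clarkeDeriv_eq hFx (clarkeDeriv_half_sq ht hF hFx)

end LambdaF

theorem changPS_of_squared_general {X Y : Type*}
    [NormedAddCommGroup X] [NormedSpace ℝ X]
    [NormedAddCommGroup Y]
    (f : X → Y) (hf : LocallyLipschitz f) (y : Y)
    (h : ℝ → ℝ)
    (hG : ChangPS (fun x : X => (1 / 2 : ℝ) * ‖f x - y‖ ^ 2) h) :
    ChangPS (fun x : X => ‖f x - y‖) h := by
  rintro u ⟨M, hM⟩ hT
  have hFM : ∀ n, ‖f (u n) - y‖ ≤ M := fun n => (le_abs_self _).trans (hM n)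
  have hF : LocallyLipschitz fun x => ‖f x - y‖ := by
    have := (LipschitzWith.dist_left y).locallyLipschitz.comp hf
    simpa only [Function.comp_def, dist_eq_norm] using this
  refine hG u ⟨1 / 2 * M ^ 2, fun n => ?_⟩ ?_
  · dsimp only
    rw [abs_of_nonneg (by positivity)]
    gcongr
    exact hFM n
  · refine squeeze_zero_norm (fun n => ?_)
      (by simpa only [norm_zero, mul_zero] using hT.norm.const_mul M)
    obtain ⟨K, t, ht, hFt⟩ := hF (u n)
    rw [lambdaF_half_sq ht hFt (norm_nonneg _), mul_assoc, norm_mul, Real.norm_of_nonneg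
      (norm_nonneg _)]
    exact mul_le_mul_of_nonneg_right (hFM n) (norm_nonneg _)

/-- If `G_y(x) = (1/2)‖f(x) − y‖²` satisfies the weighted Chang–Palais–Smale condition with
respect to a weight `h`, then so does `F_y(x) = ‖f(x) − y‖`. -/
theorem changPS_of_squared {X Y : Type*}
    [NormedAddCommGroup X] [NormedSpace ℝ X] [CompleteSpace X]
    [NormedAddCommGroup Y] [NormedSpace ℝ Y] [CompleteSpace Y]
    (f : X → Y) (hf : LocallyLipschitz f) (y : Y)
    (h : ℝ → ℝ) (hw : IsWeight h)
    (hG : ChangPS (fun x : X => (1 / 2 : ℝ) * ‖f x - y‖ ^ 2) h) :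
    ChangPS (fun x : X => ‖f x - y‖) h :=
  changPS_of_squared_general f hf y h hG
end
end
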